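/- Fix an integer n ≥ 1 and real numbers p > 1, q > 1, r ≥ 2 with r > max{2, n}(p-1), and additionally r < 2n/(n-2) if n ≥ 3. Define a* := r(nq+2-n)/(2(r - n(p-1))) and b* := (1/2 + 1/n - 1/r)/(2/n). Suppose q < ((n²p - n² - 4p + 12)r - 2n²p + 2n² - 4np + 4n)/((n²p - n² + 2np - 2n)r - 2n²p + 2n²) and the denominator (n²p - n² + 2np - 2n)r - 2n²p + 2n² is positive. Then nq + 2 - n < 8(r - n(p-1))/((p-1)(nr + 2r - 2n)), and consequently 2a*·b*·(p-1) < 2. -/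

import Mathlib

/-!
Writing `A = n r + 2 r - 2 n` and `R = r - n (p - 1)`, the bound on `q` is a disguised form of the
first claim: its denominator is `n · (p - 1) A` and its numerator is `8 R - (2 - n) (p - 1) A`.
Since `b* = A / (4 r)`, the product `2 a* b* (p - 1)` equals `(n q + 2 - n) (p - 1) A / (4 R)`,
which is below `2` exactly by the first claim.
-/

lemma exponent_bound_numerator_eq (n p r : ℝ) :
    (n ^ 2 * p - n ^ 2 - 4 * p + 12) * r - 2 * n ^ 2 * p + 2 * n ^ 2 - 4 * n * p + 4 * n
      = 8 * (r - n * (p - 1)) - (2 - n) * ((p - 1) * (n * r + 2 * r - 2 * n)) := by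
  ring

lemma exponent_bound_denominator_eq (n p r : ℝ) :
    (n ^ 2 * p - n ^ 2 + 2 * n * p - 2 * n) * r - 2 * n ^ 2 * p + 2 * n ^ 2
      = n * ((p - 1) * (n * r + 2 * r - 2 * n)) := by
  ring

lemma mul_add_sub_mul_lt_of_lt_div {n q B M : ℝ} (hn : 0 < n) (hB : 0 < B)
    (hq : q < (M - (2 - n) * B) / (n * B)) : (n * q + 2 - n) * B < M := by
  rw [lt_div_iff₀ (mul_pos hn hB)] at hq
  linarith

lemma half_add_inv_sub_inv_div_two_div {n r : ℝ} (hn : n ≠ 0) (hr : r ≠ 0) :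
    (1 / 2 + 1 / n - 1 / r) / (2 / n) = (n * r + 2 * r - 2 * n) / (4 * r) := by
  field_simp
  ring

lemma two_mul_div_mul_div_mul_sub_one {r R x A p : ℝ} (hr : r ≠ 0) :
    2 * (r * x / (2 * R)) * (A / (4 * r)) * (p - 1) = x * ((p - 1) * A) / (4 * R) := by
  field_simp

theorem stmt_10_general (n : ℕ) (hn : 1 ≤ n) (p q r aStar bStar : ℝ)
    (hp : 1 < p) (hr : max 2 (n : ℝ) * (p - 1) < r)
    (haStar : aStar = r * ((n : ℝ) * q + 2 - (n : ℝ)) / (2 * (r - (n : ℝ) * (p - 1))))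
    (hbStar : bStar = (1 / 2 + 1 / (n : ℝ) - 1 / r) / (2 / (n : ℝ)))
    (hden : 0 < ((n : ℝ)^2 * p - (n : ℝ)^2 + 2 * (n : ℝ) * p - 2 * (n : ℝ)) * r
              - 2 * (n : ℝ)^2 * p + 2 * (n : ℝ)^2)
    (hqlt : q < (((n : ℝ)^2 * p - (n : ℝ)^2 - 4 * p + 12) * r
              - 2 * (n : ℝ)^2 * p + 2 * (n : ℝ)^2 - 4 * (n : ℝ) * p + 4 * (n : ℝ)) /
            (((n : ℝ)^2 * p - (n : ℝ)^2 + 2 * (n : ℝ) * p - 2 * (n : ℝ)) * r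
              - 2 * (n : ℝ)^2 * p + 2 * (n : ℝ)^2)) :
    (n : ℝ) * q + 2 - (n : ℝ)
      < 8 * (r - (n : ℝ) * (p - 1)) / ((p - 1) * ((n : ℝ) * r + 2 * r - 2 * (n : ℝ))) ∧
    2 * aStar * bStar * (p - 1) < 2 := by
  have hn0 : (0 : ℝ) < n := by exact_mod_cast hn
  have hp1 : 0 < p - 1 := sub_pos.mpr hp
  have hr0 : 0 < r := (mul_pos (lt_max_of_lt_left two_pos) hp1).trans hr
  have hR : 0 < r - n * (p - 1) :=
    sub_pos.mpr ((mul_le_mul_of_nonneg_right (le_max_right _ _) hp1.le).trans_lt hr)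
  rw [exponent_bound_denominator_eq] at hden hqlt
  rw [exponent_bound_numerator_eq] at hqlt
  have hB := pos_of_mul_pos_right hden hn0.le
  have hqB := mul_add_sub_mul_lt_of_lt_div hn0 hB hqlt
  refine ⟨(lt_div_iff₀ hB).mpr hqB, ?_⟩
  rw [haStar, hbStar, half_add_inv_sub_inv_div_two_div hn0.ne' hr0.ne',
    two_mul_div_mul_div_mul_sub_one hr0.ne', div_lt_iff₀ (by positivity)]
  linarith

theorem stmt_10 (n : ℕ) (hn : 1 ≤ n) (p q r aStar bStar : ℝ)
    (hp : 1 < p) (hq : 1 < q) (hr2 : 2 ≤ r) (hr : max 2 (n : ℝ) * (p - 1) < r)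
    (hrn : 3 ≤ n → r < 2 * (n : ℝ) / ((n : ℝ) - 2))
    (haStar : aStar = r * ((n : ℝ) * q + 2 - (n : ℝ)) / (2 * (r - (n : ℝ) * (p - 1))))
    (hbStar : bStar = (1 / 2 + 1 / (n : ℝ) - 1 / r) / (2 / (n : ℝ)))
    (hden : 0 < ((n : ℝ)^2 * p - (n : ℝ)^2 + 2 * (n : ℝ) * p - 2 * (n : ℝ)) * r
              - 2 * (n : ℝ)^2 * p + 2 * (n : ℝ)^2)
    (hqlt : q < (((n : ℝ)^2 * p - (n : ℝ)^2 - 4 * p + 12) * r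
              - 2 * (n : ℝ)^2 * p + 2 * (n : ℝ)^2 - 4 * (n : ℝ) * p + 4 * (n : ℝ)) /
            (((n : ℝ)^2 * p - (n : ℝ)^2 + 2 * (n : ℝ) * p - 2 * (n : ℝ)) * r
              - 2 * (n : ℝ)^2 * p + 2 * (n : ℝ)^2)) :
    (n : ℝ) * q + 2 - (n : ℝ)
      < 8 * (r - (n : ℝ) * (p - 1)) / ((p - 1) * ((n : ℝ) * r + 2 * r - 2 * (n : ℝ))) ∧
    2 * aStar * bStar * (p - 1) < 2 :=
  stmt_10_general n hn p q r aStar bStar hp hr haStar hbStar hden hqlt
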